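/- Let K ≥ 1 and p ≥ 1. Let Ψ_1, …, Ψ_K be real symmetric p×p matrices and 0 < λ_1 ≤ λ_2 be such that λ_1 ‖v‖² ≤ vᵀ Ψ_k v ≤ λ_2 ‖v‖² for every k ∈ {1,…,K} and every v ∈ ℝ^p, where ‖·‖ is the Euclidean norm. Let β_1, …, β_K, β_0 ∈ ℝ^p, set S = ∑_{k=1}^K Ψ_k and β_DSE = S⁻¹(∑_{k=1}^K Ψ_k β_k). Then ‖β_DSE − β_0‖ ≤ (λ_2/λ_1) · max_{1≤k≤K} ‖β_k − β_0‖. -/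

import Mathlib

open Matrix Finset

open scoped RealInnerProductSpace

/-!
Put `S = ∑ₖ Ψₖ`. Then `S (β_DSE - β₀) = ∑ₖ Ψₖ (βₖ - β₀)`. The lower bounds make `S` coercive with
constant `K λ₁`, so `K λ₁ ‖β_DSE - β₀‖ ≤ ‖S (β_DSE - β₀)‖`. Each `Ψₖ` is symmetric, so its operator
norm is the supremum of its Rayleigh quotient, which is at most `λ₂`. Hence the right-hand side
is at most `K λ₂ maxₖ ‖βₖ - β₀‖`.
-/

section InnerProductSpace

variable {E : Type*} [NormedAddCommGroup E] [InnerProductSpace ℝ E]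

theorem mul_norm_le_norm_of_mul_norm_sq_le_inner {c : ℝ} {x y : E}
    (h : c * ‖x‖ ^ 2 ≤ ⟪y, x⟫) : c * ‖x‖ ≤ ‖y‖ := by
  rcases (norm_nonneg x).eq_or_lt with hx | hx
  · rw [← hx, mul_zero]
    exact norm_nonneg y
  · refine le_of_mul_le_mul_right ?_ hx
    calc c * ‖x‖ * ‖x‖ = c * ‖x‖ ^ 2 := by ring
      _ ≤ ⟪y, x⟫ := h
      _ ≤ ‖y‖ * ‖x‖ := real_inner_le_norm y x

theorem ContinuousLinearMap.opNorm_le_of_inner_apply_self_le {T : E →L[ℝ] E}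
    (hT : (T : E →ₗ[ℝ] E).IsSymmetric) {b : ℝ} (hb : 0 ≤ b)
    (hpos : ∀ x, 0 ≤ ⟪T x, x⟫) (hle : ∀ x, ⟪T x, x⟫ ≤ b * ‖x‖ ^ 2) : ‖T‖ ≤ b := by
  rw [T.norm_eq_iSup_rayleighQuotient hT]
  refine ciSup_le fun x => ?_
  change |⟪T x, x⟫ / ‖x‖ ^ 2| ≤ b
  rw [abs_of_nonneg (div_nonneg (hpos x) (sq_nonneg _))]
  exact div_le_of_le_mul₀ (sq_nonneg _) hb (hle x)

theorem norm_sum_apply_le_card_mul {ι F : Type*} [Fintype ι] [NormedAddCommGroup F]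
    [NormedSpace ℝ F] {T : ι → E →L[ℝ] F} {x : ι → E} {b M : ℝ}
    (hT : ∀ i, ‖T i‖ ≤ b) (hx : ∀ i, ‖x i‖ ≤ M) :
    ‖∑ i, T i (x i)‖ ≤ Fintype.card ι * (b * M) :=
  calc ‖∑ i, T i (x i)‖ ≤ ∑ i, ‖T i (x i)‖ := norm_sum_le _ _
    _ ≤ ∑ _i : ι, b * M := sum_le_sum fun i _ =>
        (T i).le_of_opNorm_le_of_le (hT i) (hx i)
    _ = Fintype.card ι * (b * M) := by simp

end InnerProductSpace

namespace Matrix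

variable {n : Type*} [Fintype n] [DecidableEq n]

theorem IsSymm.opNorm_toEuclideanCLM_le {A : Matrix n n ℝ} (hA : A.IsSymm) {b : ℝ} (hb : 0 ≤ b)
    (hpos : ∀ v : EuclideanSpace ℝ n, 0 ≤ v ⬝ᵥ A *ᵥ v)
    (hle : ∀ v : EuclideanSpace ℝ n, v ⬝ᵥ A *ᵥ v ≤ b * ‖v‖ ^ 2) :
    ‖toEuclideanCLM (𝕜 := ℝ) A‖ ≤ b := by
  have hsymm :
      (toEuclideanCLM (𝕜 := ℝ) A : EuclideanSpace ℝ n →ₗ[ℝ] EuclideanSpace ℝ n).IsSymmetric := by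
    rw [coe_toEuclideanCLM_eq_toEuclideanLin, isSymmetric_toEuclideanLin_iff,
      isHermitian_iff_isSymm]
    exact hA
  refine ContinuousLinearMap.opNorm_le_of_inner_apply_self_le hsymm hb (fun v => ?_) (fun v => ?_)
  · rw [real_inner_comm, inner_toEuclideanCLM]; exact hpos v
  · rw [real_inner_comm, inner_toEuclideanCLM]; exact hle v

theorem mul_norm_le_norm_toEuclideanCLM_apply {A : Matrix n n ℝ} {c : ℝ}
    (h : ∀ v : EuclideanSpace ℝ n, c * ‖v‖ ^ 2 ≤ v ⬝ᵥ A *ᵥ v) (v : EuclideanSpace ℝ n) :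
    c * ‖v‖ ≤ ‖toEuclideanCLM (𝕜 := ℝ) A v‖ :=
  mul_norm_le_norm_of_mul_norm_sq_le_inner <| by
    rw [real_inner_comm, inner_toEuclideanCLM]; exact h v

theorem isUnit_of_mul_norm_sq_le_dotProduct_mulVec {A : Matrix n n ℝ} {c : ℝ} (hc : 0 < c)
    (h : ∀ v : EuclideanSpace ℝ n, c * ‖v‖ ^ 2 ≤ v ⬝ᵥ A *ᵥ v) : IsUnit A := by
  refine mulVec_injective_iff_isUnit.mp <| (injective_iff_map_eq_zero A.mulVecLin).2 fun v hv => ?_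
  have hAv : A *ᵥ v = 0 := hv
  have hnorm : c * ‖WithLp.toLp 2 v‖ ≤ 0 := by
    simpa [hAv] using mul_norm_le_norm_toEuclideanCLM_apply h (WithLp.toLp 2 v)
  simpa using nonpos_of_mul_nonpos_right hnorm hc

theorem inv_mulVec_sum_mulVec_sub {R ι : Type*} [CommRing R] [Fintype ι] {Ψ : ι → Matrix n n R}
    (hΨ : IsUnit (∑ i, Ψ i)) (β : ι → n → R) (β₀ : n → R) :
    (∑ i, Ψ i)⁻¹ *ᵥ (∑ i, Ψ i *ᵥ β i) - β₀ = (∑ i, Ψ i)⁻¹ *ᵥ ∑ i, Ψ i *ᵥ (β i - β₀) := by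
  have hsum : ∑ i, Ψ i *ᵥ (β i - β₀) = ∑ i, Ψ i *ᵥ β i - (∑ i, Ψ i) *ᵥ β₀ := by
    simp only [mulVec_sub, sum_sub_distrib, sum_mulVec]
  rw [hsum, mulVec_sub, mulVec_mulVec, nonsing_inv_mul _ ((isUnit_iff_isUnit_det _).mp hΨ),
    one_mulVec]

end Matrix

theorem dse_error_le_condition_ratio_mul_max_general
    (K p : ℕ) (hK : 1 ≤ K)
    (Ψ : Fin K → Matrix (Fin p) (Fin p) ℝ)
    (hΨsymm : ∀ k, (Ψ k).IsSymm)
    (l₁ l₂ : ℝ) (hl₁ : 0 < l₁) (hl₁₂ : l₁ ≤ l₂)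
    (hbd : ∀ (k : Fin K) (v : EuclideanSpace ℝ (Fin p)),
      l₁ * ‖v‖ ^ 2 ≤ v ⬝ᵥ (Ψ k).mulVec v ∧ v ⬝ᵥ (Ψ k).mulVec v ≤ l₂ * ‖v‖ ^ 2)
    (β : Fin K → EuclideanSpace ℝ (Fin p)) (β₀ : EuclideanSpace ℝ (Fin p))
    (S : Matrix (Fin p) (Fin p) ℝ) (hS : S = ∑ k, Ψ k)
    (βDSE : EuclideanSpace ℝ (Fin p))
    (hβDSE : βDSE = S⁻¹.mulVec (∑ k, (Ψ k).mulVec (β k))) :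
    ‖βDSE - β₀‖ ≤
      (l₂ / l₁) * Finset.univ.sup' ⟨⟨0, hK⟩, Finset.mem_univ _⟩
        (fun k => ‖β k - β₀‖) := by
  set M := univ.sup' ⟨⟨0, hK⟩, mem_univ _⟩ fun k => ‖β k - β₀‖
  subst hS
  have hK₀ : (0 : ℝ) < K := by exact_mod_cast hK
  have hS_form (v : EuclideanSpace ℝ (Fin p)) : K * l₁ * ‖v‖ ^ 2 ≤ v ⬝ᵥ (∑ k, Ψ k) *ᵥ v := by
    rw [sum_mulVec, dotProduct_sum, mul_assoc]
    simpa using card_nsmul_le_sum univ _ _ fun k _ => (hbd k v).1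
  have hΨ_norm (k : Fin K) : ‖toEuclideanCLM (𝕜 := ℝ) (Ψ k)‖ ≤ l₂ :=
    (hΨsymm k).opNorm_toEuclideanCLM_le (hl₁.le.trans hl₁₂)
      (fun v => (mul_nonneg hl₁.le (sq_nonneg _)).trans (hbd k v).1) fun v => (hbd k v).2
  have hdecomp : toEuclideanCLM (𝕜 := ℝ) (∑ k, Ψ k) (βDSE - β₀) =
      ∑ k, toEuclideanCLM (𝕜 := ℝ) (Ψ k) (β k - β₀) := by
    have hunit := isUnit_of_mul_norm_sq_le_dotProduct_mulVec (mul_pos hK₀ hl₁) hS_form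
    apply WithLp.ofLp_injective
    rw [ofLp_toEuclideanCLM, WithLp.ofLp_sub, hβDSE, inv_mulVec_sum_mulVec_sub hunit,
      mulVec_mulVec, mul_nonsing_inv _ ((isUnit_iff_isUnit_det _).mp hunit), one_mulVec,
      WithLp.ofLp_sum]
    simp only [ofLp_toEuclideanCLM, WithLp.ofLp_sub]
  have hK_error : K * (l₁ * ‖βDSE - β₀‖) ≤ K * (l₂ * M) :=
    calc K * (l₁ * ‖βDSE - β₀‖) = K * l₁ * ‖βDSE - β₀‖ := (mul_assoc _ _ _).symm
      _ ≤ ‖∑ k, toEuclideanCLM (𝕜 := ℝ) (Ψ k) (β k - β₀)‖ :=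
          hdecomp ▸ mul_norm_le_norm_toEuclideanCLM_apply hS_form _
      _ ≤ Fintype.card (Fin K) * (l₂ * M) :=
          norm_sum_apply_le_card_mul hΨ_norm fun k => le_sup' (fun k => ‖β k - β₀‖) (mem_univ k)
      _ = K * (l₂ * M) := by rw [Fintype.card_fin]
  rw [div_mul_eq_mul_div, le_div_iff₀ hl₁, mul_comm]
  exact le_of_mul_le_mul_left hK_error hK₀

/-- Quantitative deterministic version of Theorem 2: under the two-sided
bounds `λ₁‖v‖² ≤ vᵀΨₖv ≤ λ₂‖v‖²`, the distributed subsample estimator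
`β_DSE = S⁻¹ ∑ₖ Ψₖ βₖ` (with `S = ∑ₖ Ψₖ`) satisfies
`‖β_DSE − β₀‖ ≤ (λ₂/λ₁) · maxₖ ‖βₖ − β₀‖`. -/
theorem dse_error_le_condition_ratio_mul_max
    (K p : ℕ) (hK : 1 ≤ K) (hp : 1 ≤ p)
    (Ψ : Fin K → Matrix (Fin p) (Fin p) ℝ)
    (hΨsymm : ∀ k, (Ψ k).IsSymm)
    (l₁ l₂ : ℝ) (hl₁ : 0 < l₁) (hl₁₂ : l₁ ≤ l₂)
    (hbd : ∀ (k : Fin K) (v : EuclideanSpace ℝ (Fin p)),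
      l₁ * ‖v‖ ^ 2 ≤ v ⬝ᵥ (Ψ k).mulVec v ∧ v ⬝ᵥ (Ψ k).mulVec v ≤ l₂ * ‖v‖ ^ 2)
    (β : Fin K → EuclideanSpace ℝ (Fin p)) (β₀ : EuclideanSpace ℝ (Fin p))
    (S : Matrix (Fin p) (Fin p) ℝ) (hS : S = ∑ k, Ψ k)
    (βDSE : EuclideanSpace ℝ (Fin p))
    (hβDSE : βDSE = S⁻¹.mulVec (∑ k, (Ψ k).mulVec (β k))) :
    ‖βDSE - β₀‖ ≤
      (l₂ / l₁) * Finset.univ.sup' ⟨⟨0, hK⟩, Finset.mem_univ _⟩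
        (fun k => ‖β k - β₀‖) :=
  dse_error_le_condition_ratio_mul_max_general K p hK Ψ hΨsymm l₁ l₂ hl₁ hl₁₂ hbd β β₀ S hS βDSE
    hβDSE
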